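/- Let f : [0,1] → ℝ be a continuous function with f(φ) > 0 for φ > 0, f(0) = 0, and such that the limit as φ → 0⁺ of φ/f(φ) exists and is positive. Then the limit as ε → 0⁺ of ∫₀¹ (ε/f(φ)) · exp(−ε/f(φ)) dφ equals 0. -/

import Mathlib

/-!
With `x = ε / f φ ≥ 0` the integrand is `x * exp (-x) ≤ exp (-1)`, and it tends to `0` pointwise
as `ε → 0⁺`; dominated convergence on the finite measure space `(0, 1]` concludes.
-/

open Real Filter MeasureTheory Topology

theorem tendsto_integral_div_mul_exp_neg_div {α : Type*} [MeasurableSpace α] {μ : Measure α}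
    [IsFiniteMeasure μ] {g : α → ℝ} (hg_meas : AEMeasurable g μ) (hg_nonneg : ∀ᵐ a ∂μ, 0 ≤ g a) :
    Tendsto (fun ε => ∫ a, (ε / g a) * exp (-(ε / g a)) ∂μ) (𝓝[>] 0) (𝓝 0) := by
  have h_cont : Continuous fun x : ℝ => x * exp (-x) := by fun_prop
  have h_meas : ∀ᶠ ε in 𝓝[>] (0 : ℝ),
      AEStronglyMeasurable (fun a => (ε / g a) * exp (-(ε / g a))) μ :=
    Eventually.of_forall fun ε =>
      (h_cont.measurable.comp_aemeasurable (aemeasurable_const.div hg_meas)).aestronglyMeasurable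
  have h_bound : ∀ᶠ ε in 𝓝[>] (0 : ℝ), ∀ᵐ a ∂μ, ‖(ε / g a) * exp (-(ε / g a))‖ ≤ exp (-1) := by
    filter_upwards [self_mem_nhdsWithin] with ε (hε : 0 < ε)
    filter_upwards [hg_nonneg] with a ha
    rw [norm_of_nonneg (mul_nonneg (div_nonneg hε.le ha) (exp_pos _).le)]
    exact mul_exp_neg_le_exp_neg_one _
  have h_lim : ∀ᵐ a ∂μ,
      Tendsto (fun ε : ℝ => (ε / g a) * exp (-(ε / g a))) (𝓝[>] 0) (𝓝 0) := by
    refine Eventually.of_forall fun a => ?_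
    have h_div : Tendsto (fun ε : ℝ => ε / g a) (𝓝 0) (𝓝 0) := by
      simpa using (tendsto_id (x := 𝓝 (0 : ℝ))).div_const (g a)
    simpa [Function.comp_def] using ((h_cont.tendsto 0).comp h_div).mono_left nhdsWithin_le_nhds
  simpa using tendsto_integral_filter_of_dominated_convergence _ h_meas h_bound
    (integrable_const _) h_lim

theorem limit_K_eps_zero_general (f : ℝ → ℝ)
    (hf_cont : ContinuousOn f (Set.Icc 0 1))
    (hf_pos : ∀ φ : ℝ, φ ∈ Set.Ioc (0:ℝ) 1 → 0 < f φ) :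
    Tendsto (fun ε => ∫ φ in (0:ℝ)..1, (ε / f φ) * Real.exp (-(ε / f φ)))
      (nhdsWithin 0 (Set.Ioi 0)) (nhds 0) := by
  simp only [intervalIntegral.integral_of_le zero_le_one]
  exact tendsto_integral_div_mul_exp_neg_div
    ((hf_cont.mono Set.Ioc_subset_Icc_self).aemeasurable measurableSet_Ioc)
    ((ae_restrict_mem measurableSet_Ioc).mono fun φ hφ => (hf_pos φ hφ).le)

/-- If `f` is continuous on `[0,1]`, positive on `(0,1]`, vanishes at `0`, and
`φ / f φ` has a positive limit as `φ → 0⁺`, then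
`∫₀¹ (ε / f φ) · exp(−ε / f φ) dφ → 0` as `ε → 0⁺`. -/
theorem limit_K_eps_zero (f : ℝ → ℝ)
    (hf_cont : ContinuousOn f (Set.Icc 0 1))
    (hf_pos : ∀ φ : ℝ, φ ∈ Set.Ioc (0:ℝ) 1 → 0 < f φ)
    (hf_zero : f 0 = 0)
    (L : ℝ) (hL : 0 < L)
    (hlim : Tendsto (fun φ => φ / f φ) (nhdsWithin 0 (Set.Ioi 0)) (nhds L)) :
    Tendsto (fun ε => ∫ φ in (0:ℝ)..1, (ε / f φ) * Real.exp (-(ε / f φ)))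
      (nhdsWithin 0 (Set.Ioi 0)) (nhds 0) :=
  limit_K_eps_zero_general f hf_cont hf_pos
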